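/- Let T be a symmetric bilinear form on Minkowski space ℝ⁴ satisfying the dominant energy condition, and suppose T♯X = 0 for some future-directed null vector X (η(X,X) = 0, X ≠ 0, X 0 > 0). Then there exists χ ≥ 0 such that T(u,v) = χ * η(X,u) * η(X,v) for all u, v. -/

import Mathlib

/-!
Since `T♯X = 0` and `T` is symmetric, `η(T♯Z, X) = T(X, Z) = 0` for every `Z`. For future
causal `Z` the vector `T♯Z` is causal, and a causal vector η-orthogonal to the null vector `X` is a multiple
of `X` (reverse Cauchy–Schwarz); so `T(Z, ·) = c_Z η(X, ·)` with `c_Z ≥ 0`. Every vector is a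
difference of two future causal ones, hence `T(u, ·) = c_u η(X, ·)` for all `u`, and evaluating
the symmetry `T(u, e₀) = T(e₀, u)` gives `c_u = c_{e₀} η(X, u) / X⁰`.
-/

noncomputable def eta (x y : Fin 4 → ℝ) : ℝ :=
  x 0 * y 0 - x 1 * y 1 - x 2 * y 2 - x 3 * y 3

def IsFutureCausal (Z : Fin 4 → ℝ) : Prop :=
  0 ≤ eta Z Z ∧ 0 ≤ Z 0

lemma eta_smul_left (c : ℝ) (x y : Fin 4 → ℝ) : eta (c • x) y = c * eta x y := by
  simp only [eta, Pi.smul_apply, smul_eq_mul]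
  ring

lemma eta_zero_left (y : Fin 4 → ℝ) : eta 0 y = 0 := by
  simpa using eta_smul_left 0 0 y

lemma eta_single_zero_right (x : Fin 4 → ℝ) : eta x (Pi.single 0 1) = x 0 := by
  simp [eta]

lemma isFutureCausal_single_zero : IsFutureCausal (Pi.single 0 1) := by
  constructor <;> simp [eta]

lemma eq_smul_of_eta_eq_zero_of_null {X W : Fin 4 → ℝ} (hX : eta X X = 0) (hX0 : X 0 ≠ 0)
    (hW : 0 ≤ eta W W) (hWX : eta W X = 0) : W = (W 0 / X 0) • X := by
  simp only [eta] at hX hW hWX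
  -- Lagrange's identity in the spatial coordinates: reverse Cauchy–Schwarz for η.
  have hsum : (W 1 * X 0 - W 0 * X 1) ^ 2 + (W 2 * X 0 - W 0 * X 2) ^ 2
      + (W 3 * X 0 - W 0 * X 3) ^ 2
      = -X 0 ^ 2 * (W 0 * W 0 - W 1 * W 1 - W 2 * W 2 - W 3 * W 3) := by
    linear_combination (2 * W 0 * X 0) * hWX - (W 0 * W 0) * hX
  have hle : (W 1 * X 0 - W 0 * X 1) ^ 2 + (W 2 * X 0 - W 0 * X 2) ^ 2
      + (W 3 * X 0 - W 0 * X 3) ^ 2 ≤ 0 := by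
    rw [hsum]; nlinarith [sq_nonneg (X 0)]
  obtain ⟨h1, h2, h3⟩ :
      W 1 * X 0 = W 0 * X 1 ∧ W 2 * X 0 = W 0 * X 2 ∧ W 3 * X 0 = W 0 * X 3 := by
    refine ⟨?_, ?_, ?_⟩ <;>
      nlinarith [sq_nonneg (W 1 * X 0 - W 0 * X 1), sq_nonneg (W 2 * X 0 - W 0 * X 2),
        sq_nonneg (W 3 * X 0 - W 0 * X 3)]
  funext i
  fin_cases i <;> simp only [Pi.smul_apply, smul_eq_mul] <;> field_simp <;> simp [h1, h2, h3]

lemma isFutureCausal_of_abs_add_le {Z : Fin 4 → ℝ} (h : |Z 1| + |Z 2| + |Z 3| ≤ Z 0) :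
    IsFutureCausal Z := by
  have h₁ := abs_nonneg (Z 1)
  have h₂ := abs_nonneg (Z 2)
  have h₃ := abs_nonneg (Z 3)
  refine ⟨?_, by linarith⟩
  have : Z 1 * Z 1 + Z 2 * Z 2 + Z 3 * Z 3 ≤ (|Z 1| + |Z 2| + |Z 3|) ^ 2 := by
    nlinarith [abs_mul_abs_self (Z 1), abs_mul_abs_self (Z 2), abs_mul_abs_self (Z 3)]
  unfold eta
  nlinarith

lemma exists_isFutureCausal_sub_eq (u : Fin 4 → ℝ) :
    ∃ Z₁ Z₂, IsFutureCausal Z₁ ∧ IsFutureCausal Z₂ ∧ u = Z₁ - Z₂ := by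
  set s := |u 0| + |u 1| + |u 2| + |u 3|
  refine ⟨u + s • Pi.single 0 1, s • Pi.single 0 1, isFutureCausal_of_abs_add_le ?_,
    isFutureCausal_of_abs_add_le ?_, by simp⟩
  · simp only [Pi.add_apply, Pi.smul_apply, smul_eq_mul, Pi.single_eq_same, ne_eq,
      Pi.single_eq_of_ne, Fin.reduceEq, not_false_eq_true, mul_zero, add_zero, mul_one]
    linarith [neg_abs_le (u 0)]
  · simp only [Pi.smul_apply, smul_eq_mul, Pi.single_eq_same, ne_eq, Pi.single_eq_of_ne,
      Fin.reduceEq, not_false_eq_true, mul_zero, abs_zero, add_zero, mul_one]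
    positivity

section

variable {T : LinearMap.BilinForm ℝ (Fin 4 → ℝ)} {Tsharp : (Fin 4 → ℝ) → (Fin 4 → ℝ)}
  {X : Fin 4 → ℝ}

lemma exists_apply_eq_mul_eta_of_isFutureCausal (hT : ∀ x y, T x y = T y x)
    (hTs : ∀ x u, eta (Tsharp x) u = T x u)
    (hDEC : ∀ Z, IsFutureCausal Z → IsFutureCausal (Tsharp Z))
    (hXnull : eta X X = 0) (hXfut : 0 < X 0) (hTX : Tsharp X = 0)
    {Z : Fin 4 → ℝ} (hZ : IsFutureCausal Z) :
    ∃ c, 0 ≤ c ∧ ∀ u, T Z u = c * eta X u := by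
  obtain ⟨hW, hW0⟩ := hDEC Z hZ
  have hWX : eta (Tsharp Z) X = 0 := by
    rw [hTs, hT, ← hTs, hTX, eta_zero_left]
  have hWeq := eq_smul_of_eta_eq_zero_of_null hXnull hXfut.ne' hW hWX
  refine ⟨Tsharp Z 0 / X 0, div_nonneg hW0 hXfut.le, fun u => ?_⟩
  rw [← hTs, ← eta_smul_left, ← hWeq]

lemma exists_apply_eq_mul_of_isFutureCausal {f : (Fin 4 → ℝ) → ℝ}
    (hrows : ∀ Z, IsFutureCausal Z → ∃ c, ∀ v, T Z v = c * f v)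
    (u : Fin 4 → ℝ) : ∃ c, ∀ v, T u v = c * f v := by
  obtain ⟨Z₁, Z₂, h₁, h₂, rfl⟩ := exists_isFutureCausal_sub_eq u
  obtain ⟨c₁, hc₁⟩ := hrows Z₁ h₁
  obtain ⟨c₂, hc₂⟩ := hrows Z₂ h₂
  exact ⟨c₁ - c₂, fun v => by rw [map_sub, LinearMap.sub_apply, hc₁, hc₂, sub_mul]⟩

end

theorem nullDust_of_DEC_sharp_eq_zero_general
    (T : LinearMap.BilinForm ℝ (Fin 4 → ℝ)) (hT : ∀ x y, T x y = T y x)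
    (Tsharp : (Fin 4 → ℝ) → (Fin 4 → ℝ))
    (hTs : ∀ x u, eta (Tsharp x) u = T x u)
    (hDEC : ∀ Z : Fin 4 → ℝ, eta Z Z ≥ 0 → Z 0 ≥ 0 →
        eta (Tsharp Z) (Tsharp Z) ≥ 0 ∧ (Tsharp Z) 0 ≥ 0)
    (X : Fin 4 → ℝ) (hXnull : eta X X = 0) (hXfut : X 0 > 0)
    (hTX : Tsharp X = 0) :
    ∃ χ : ℝ, 0 ≤ χ ∧ ∀ u v : Fin 4 → ℝ, T u v = χ * eta X u * eta X v := by
  have hrow {Z} (hZ : IsFutureCausal Z) :=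
    exists_apply_eq_mul_eta_of_isFutureCausal hT hTs (fun Z hZ => hDEC Z hZ.1 hZ.2) hXnull hXfut
      hTX hZ
  obtain ⟨χ₀, hχ₀, he₀⟩ := hrow isFutureCausal_single_zero
  refine ⟨χ₀ / X 0, div_nonneg hχ₀ hXfut.le, fun u v => ?_⟩
  obtain ⟨c, hc⟩ :=
    exists_apply_eq_mul_of_isFutureCausal (fun Z hZ => (hrow hZ).imp fun _ h => h.2) u
  have hcX : c * X 0 = χ₀ * eta X u := by
    rw [← eta_single_zero_right X, ← hc, hT, he₀]
  have hc_eq : c = χ₀ / X 0 * eta X u := by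
    field_simp
    linarith
  rw [hc, hc_eq]

/-- If T satisfies the dominant energy condition and T♯X = 0 for a
future-directed null vector X, then T is null dust along X. -/
theorem nullDust_of_DEC_sharp_eq_zero
    (T : LinearMap.BilinForm ℝ (Fin 4 → ℝ)) (hT : ∀ x y, T x y = T y x)
    (Tsharp : (Fin 4 → ℝ) → (Fin 4 → ℝ))
    (hTs : ∀ x u, eta (Tsharp x) u = T x u)
    (hDEC : ∀ Z : Fin 4 → ℝ, eta Z Z ≥ 0 → Z 0 ≥ 0 →
        eta (Tsharp Z) (Tsharp Z) ≥ 0 ∧ (Tsharp Z) 0 ≥ 0)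
    (X : Fin 4 → ℝ) (hXnull : eta X X = 0) (hXne : X ≠ 0) (hXfut : X 0 > 0)
    (hTX : Tsharp X = 0) :
    ∃ χ : ℝ, 0 ≤ χ ∧ ∀ u v : Fin 4 → ℝ, T u v = χ * eta X u * eta X v :=
  nullDust_of_DEC_sharp_eq_zero_general T hT Tsharp hTs hDEC X hXnull hXfut hTX
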